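/- Let N ≥ 2 and M = (m_0, m_1, …, m_N) ∈ ℂ^{N+1} with m_0 ∈ ℝ and (m_1, …, m_N) ≠ 0. Suppose r', r ∈ (0, 1] satisfy λ(r'; N−1) = 0 and λ(r; N) = 0, where λ(s; K) denotes the minimum eigenvalue of the Hermitian Toeplitz matrix H_K(M_K^*(s)) built from (m_0, …, m_K). Then r ≥ r'. -/

import Mathlib

open ComplexOrder

/-- Extension of the moment sequence to `ℤ` by the convention `m_{−k} = conj(m_k)`. -/
noncomputable def mz (m : ℕ → ℂ) : ℤ → ℂ :=
  fun k => if 0 ≤ k then m k.toNat else (starRingEnd ℂ) (m (-k).toNat)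

/-- The Toeplitz matrix `H_K(M_K^*(s))` with entries `m_{l−j} s^{−|l−j|}`. -/
noncomputable def toeplitzStar (K : ℕ) (m : ℕ → ℂ) (s : ℝ) :
    Matrix (Fin (K + 1)) (Fin (K + 1)) ℂ :=
  fun j l => mz m ((l : ℤ) - (j : ℤ)) * (s : ℂ) ^ (-(((l : ℤ) - (j : ℤ)).natAbs : ℤ))

/-!
Suppose `r < r'` and put `ρ = r / r' ∈ (0, 1)`. Entrywise, `H_{N-1}(M^*(r'))` is the Hadamard
product of `H_{N-1}(M^*(r))` with the Kac–Murdock–Szegő matrix `(ρ^|l-j|)`, which is positive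
definite since it factors as `Uᴴ D U` with `U` unit upper triangular and `D` a positive diagonal
matrix. The factor `H_{N-1}(M^*(r))` is positive semidefinite as a principal submatrix of
`H_N(M^*(r))`, and its diagonal `m_0` is nonzero: a positive semidefinite matrix with a zero
diagonal entry has a zero column, whereas some `m_k ≠ 0`. Oppenheim's strengthening of the Schur
product theorem (a PSD matrix with nonzero diagonal times a positive definite one is positive
definite) then makes `H_{N-1}(M^*(r'))` positive definite, contradicting `λ(r'; N-1) = 0`.
-/

namespace Matrix

open scoped MatrixOrder

variable {n 𝕜 : Type*} [Fintype n] [RCLike 𝕜]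

lemma PosSemidef.apply_eq_zero_of_diag_eq_zero {A : Matrix n n 𝕜}
    (hA : A.PosSemidef) {i : n} (hi : A i i = 0) (j : n) : A j i = 0 := by
  classical
  have hAi : A *ᵥ Pi.single i 1 = 0 := by
    rw [← hA.dotProduct_mulVec_zero_iff, mulVec_single_one]
    simp [hi]
  simpa using congrFun hAi j

lemma conjTranspose_mul_self_hadamard [DecidableEq n] (C B : Matrix n n 𝕜) :
    (Cᴴ * C) ⊙ B = ∑ k, (diagonal (C k))ᴴ * B * diagonal (C k) := by
  ext j l
  rw [sum_apply]
  simp only [diagonal_conjTranspose, mul_diagonal, diagonal_mul, Pi.star_apply]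
  simp only [hadamard_apply, mul_apply, conjTranspose_apply, Finset.sum_mul, mul_right_comm]

theorem PosSemidef.hadamard_posDef {A B : Matrix n n 𝕜} (hA : A.PosSemidef)
    (hdiag : ∀ i, A i i ≠ 0) (hB : B.PosDef) : (A ⊙ B).PosDef := by
  classical
  obtain ⟨C, rfl⟩ := CStarAlgebra.nonneg_iff_eq_star_mul_self.mp hA.nonneg
  refine .of_dotProduct_mulVec_pos (hA.isHermitian.hadamard hB.isHermitian) fun x hx => ?_
  obtain ⟨j, hxj⟩ := Function.ne_iff.mp hx
  obtain ⟨k, hkj⟩ : ∃ k, C k j ≠ 0 := by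
    by_contra! hC
    exact hdiag j (by simp [star_eq_conjTranspose, mul_apply, hC])
  have hquad : ∀ k, star x ⬝ᵥ ((diagonal (C k))ᴴ * B * diagonal (C k)) *ᵥ x =
      star (diagonal (C k) *ᵥ x) ⬝ᵥ B *ᵥ (diagonal (C k) *ᵥ x) := fun k => by
    simp only [← mulVec_mulVec, dotProduct_mulVec, star_mulVec]
  have hy : diagonal (C k) *ᵥ x ≠ 0 :=
    Function.ne_iff.mpr ⟨j, by simpa [mulVec_diagonal] using ⟨hkj, hxj⟩⟩
  rw [star_eq_conjTranspose, conjTranspose_mul_self_hadamard, sum_mulVec, dotProduct_sum]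
  simp only [hquad]
  exact Finset.sum_pos' (fun k _ => hB.posSemidef.dotProduct_mulVec_nonneg _)
    ⟨k, Finset.mem_univ k, hB.dotProduct_mulVec_pos hy⟩

end Matrix

open Matrix Finset

noncomputable def kmsWeight (ρ : ℝ) (α : ℕ) : ℝ := if α = 0 then 1 else 1 - ρ ^ 2

lemma kmsWeight_pos {ρ : ℝ} (hρ : |ρ| < 1) (α : ℕ) : 0 < kmsWeight ρ α := by
  unfold kmsWeight
  split_ifs
  · exact one_pos
  · exact sub_pos.mpr (sq_lt_one_iff_abs_lt_one ρ |>.mpr hρ)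

lemma sum_kmsWeight_mul_pow (ρ : ℝ) (j : ℕ) :
    ∑ α ∈ range (j + 1), kmsWeight ρ α * (ρ ^ 2) ^ (j - α) = 1 := by
  induction j with
  | zero => simp [kmsWeight]
  | succ j ih =>
    rw [sum_range_succ, Nat.sub_self, pow_zero, mul_one, kmsWeight, if_neg j.succ_ne_zero]
    have hshift : ∀ α ∈ range (j + 1),
        kmsWeight ρ α * (ρ ^ 2) ^ (j + 1 - α) = ρ ^ 2 * (kmsWeight ρ α * (ρ ^ 2) ^ (j - α)) := by
      intro α hα
      rw [Nat.sub_add_comm (Nat.lt_succ_iff.mp (mem_range.mp hα)), pow_succ]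
      ring
    rw [sum_congr rfl hshift, ← mul_sum, ih]
    ring

lemma sum_kmsWeight_mul_pow_mul_pow_of_le (ρ : ℝ) {n j l : ℕ} (hjl : j ≤ l) (hl : l < n) :
    ∑ α ∈ range n, (if α ≤ j then ρ ^ (j - α) else 0) * kmsWeight ρ α *
      (if α ≤ l then ρ ^ (l - α) else 0) = ρ ^ (l - j) := by
  have hsub : range (j + 1) ⊆ range n := range_subset_range.mpr (by omega)
  rw [← sum_subset hsub fun α _ hα => by rw [if_neg (by simpa using hα), zero_mul, zero_mul]]
  calc ∑ α ∈ range (j + 1), (if α ≤ j then ρ ^ (j - α) else 0) * kmsWeight ρ α *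
        (if α ≤ l then ρ ^ (l - α) else 0)
      = ∑ α ∈ range (j + 1), kmsWeight ρ α * (ρ ^ 2) ^ (j - α) * ρ ^ (l - j) := by
        refine sum_congr rfl fun α hα => ?_
        have hαj : α ≤ j := Nat.lt_succ_iff.mp (mem_range.mp hα)
        rw [if_pos hαj, if_pos (hαj.trans hjl), ← pow_mul, mul_comm 2, pow_mul,
          show l - α = (j - α) + (l - j) by omega, pow_add]
        ring
    _ = ρ ^ (l - j) := by rw [← sum_mul, sum_kmsWeight_mul_pow, one_mul]

lemma sum_kmsWeight_mul_pow_mul_pow (ρ : ℝ) {n j l : ℕ} (hj : j < n) (hl : l < n) :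
    ∑ α ∈ range n, (if α ≤ j then ρ ^ (j - α) else 0) * kmsWeight ρ α *
      (if α ≤ l then ρ ^ (l - α) else 0) = ρ ^ ((l : ℤ) - j).natAbs := by
  rcases le_total j l with hjl | hlj
  · rw [sum_kmsWeight_mul_pow_mul_pow_of_le ρ hjl hl]
    congr 1
    omega
  · rw [show ((l : ℤ) - j).natAbs = j - l by omega,
      ← sum_kmsWeight_mul_pow_mul_pow_of_le ρ hlj hj]
    exact sum_congr rfl fun α _ => by ring

noncomputable def kms (n : ℕ) (ρ : ℝ) : Matrix (Fin n) (Fin n) ℂ :=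
  fun j l => (ρ : ℂ) ^ ((l : ℤ) - j).natAbs

noncomputable def kmsFactor (n : ℕ) (ρ : ℝ) : Matrix (Fin n) (Fin n) ℂ :=
  fun α l => if α ≤ l then (ρ : ℂ) ^ ((l : ℕ) - α) else 0

lemma kms_eq_conjTranspose_mul_mul (n : ℕ) (ρ : ℝ) :
    kms n ρ =
      (kmsFactor n ρ)ᴴ * diagonal (fun α : Fin n => (kmsWeight ρ α : ℂ)) * kmsFactor n ρ := by
  ext j l
  rw [kms, ← Complex.ofReal_pow, ← sum_kmsWeight_mul_pow_mul_pow ρ j.isLt l.isLt,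
    ← Fin.sum_univ_eq_sum_range, mul_apply]
  push_cast
  simp only [mul_diagonal, conjTranspose_apply, kmsFactor, Fin.le_def]
  refine sum_congr rfl fun α _ => ?_
  split_ifs <;> simp [Complex.conj_ofReal]

theorem kms_posDef (n : ℕ) {ρ : ℝ} (hρ : |ρ| < 1) : (kms n ρ).PosDef := by
  rw [kms_eq_conjTranspose_mul_mul]
  refine PosDef.conjTranspose_mul_mul_same
    (posDef_diagonal_iff.mpr fun α => Complex.zero_lt_real.mpr (kmsWeight_pos hρ α)) ?_
  refine mulVec_injective_iff_isUnit.mpr (isUnit_iff_isUnit_det _ |>.mpr ?_)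
  have hupper : (kmsFactor n ρ).IsUpperTriangular := fun α l hlα => if_neg (not_le.mpr hlα)
  simp [det_of_isUpperTriangular hupper, kmsFactor]

lemma toeplitzStar_apply_self (K : ℕ) (m : ℕ → ℂ) (s : ℝ) (j : Fin (K + 1)) :
    toeplitzStar K m s j j = m 0 := by
  simp [toeplitzStar, mz]

lemma toeplitzStar_submatrix {K N : ℕ} (hKN : K ≤ N) (m : ℕ → ℂ) (s : ℝ) :
    (toeplitzStar N m s).submatrix (Fin.castLE (by omega)) (Fin.castLE (by omega)) =
      toeplitzStar K m s :=
  rfl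

lemma toeplitzStar_eq_hadamard_kms (K : ℕ) (m : ℕ → ℂ) {s t : ℝ} (hs : s ≠ 0) (ht : t ≠ 0) :
    toeplitzStar K m t = toeplitzStar K m s ⊙ kms (K + 1) (s / t) := by
  ext j l
  simp only [toeplitzStar, kms, hadamard_apply, _root_.zpow_neg, zpow_natCast,
    Complex.ofReal_div, div_pow]
  field_simp

lemma m_zero_ne_zero_of_posSemidef {N : ℕ} {m : ℕ → ℂ} {s : ℝ}
    (hA : (toeplitzStar N m s).PosSemidef) (hs : s ≠ 0) {k : ℕ} (hkN : k ≤ N) (hk : m k ≠ 0) :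
    m 0 ≠ 0 := by
  intro h0
  rcases Nat.eq_zero_or_pos k with rfl | hkpos
  · exact hk h0
  have hcol := hA.apply_eq_zero_of_diag_eq_zero (i := 0)
    (by rw [toeplitzStar_apply_self, h0]) ⟨k, Nat.lt_succ_of_le hkN⟩
  simp [toeplitzStar, mz, hkpos.ne', hs, hk] at hcol

/-- The vanishing of the minimum eigenvalue of `H_K(M_K^*(s))` is expressed as: the matrix is
positive semi-definite and singular. -/
theorem radius_monotone_general (N : ℕ) (m : ℕ → ℂ)
    (hm : ∃ k, 1 ≤ k ∧ k ≤ N ∧ m k ≠ 0)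
    (r' r : ℝ) (hr' : r' ∈ Set.Ioc (0 : ℝ) 1) (hr : r ∈ Set.Ioc (0 : ℝ) 1)
    (h' : (toeplitzStar (N - 1) m r').PosSemidef ∧
      ∃ v : Fin (N - 1 + 1) → ℂ, v ≠ 0 ∧ (toeplitzStar (N - 1) m r').mulVec v = 0)
    (h : (toeplitzStar N m r).PosSemidef ∧
      ∃ v : Fin (N + 1) → ℂ, v ≠ 0 ∧ (toeplitzStar N m r).mulVec v = 0) :
    r' ≤ r := by
  by_contra! hlt
  obtain ⟨k, -, hkN, hmk⟩ := hm
  have hm0 : m 0 ≠ 0 := m_zero_ne_zero_of_posSemidef h.1 hr.1.ne' hkN hmk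
  have hpsd : (toeplitzStar (N - 1) m r).PosSemidef :=
    toeplitzStar_submatrix (N.sub_le 1) m r ▸ h.1.submatrix _
  have hρ : |r / r'| < 1 := by
    rw [abs_of_pos (div_pos hr.1 hr'.1), div_lt_one hr'.1]
    exact hlt
  have hpd : (toeplitzStar (N - 1) m r').PosDef := by
    rw [toeplitzStar_eq_hadamard_kms (N - 1) m hr.1.ne' hr'.1.ne']
    exact hpsd.hadamard_posDef (fun i => by rwa [toeplitzStar_apply_self]) (kms_posDef _ hρ)
  obtain ⟨-, v, hv0, hv⟩ := h'
  exact hv0 (mulVec_injective_iff_isUnit.mpr hpd.isUnit (hv.trans (mulVec_zero _).symm))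

/-- If `λ(r'; N−1) = 0` and `λ(r; N) = 0`, then `r ≥ r'`.  Here the statement that the
minimum eigenvalue of the Hermitian Toeplitz matrix `H_K(M_K^*(s))` is zero is expressed as:
the matrix is positive semi-definite and singular. -/
theorem radius_monotone (N : ℕ) (hN : 2 ≤ N) (m : ℕ → ℂ) (hm0 : (m 0).im = 0)
    (hm : ∃ k, 1 ≤ k ∧ k ≤ N ∧ m k ≠ 0)
    (r' r : ℝ) (hr' : r' ∈ Set.Ioc (0 : ℝ) 1) (hr : r ∈ Set.Ioc (0 : ℝ) 1)
    (h' : (toeplitzStar (N - 1) m r').PosSemidef ∧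
      ∃ v : Fin (N - 1 + 1) → ℂ, v ≠ 0 ∧ (toeplitzStar (N - 1) m r').mulVec v = 0)
    (h : (toeplitzStar N m r).PosSemidef ∧
      ∃ v : Fin (N + 1) → ℂ, v ≠ 0 ∧ (toeplitzStar N m r).mulVec v = 0) :
    r' ≤ r :=
  radius_monotone_general N m hm r' r hr' hr h' h
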